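/- Let ε ≥ 0, θ* ∈ ℝ^d with θ* ≠ 0, Δ ∈ ℝ^d, x ∈ ℝ^d and y ∈ ℝ with xᵀθ* − y > 0. Define l_ε(θ) := (xᵀθ−y)² + 2ε‖θ‖₂|xᵀθ−y| + ε²‖θ‖₂² and g := 2x(xᵀθ*−y) + 2ε[(θ*/‖θ*‖₂)(xᵀθ*−y) + ‖θ*‖₂·x] + 2ε²θ*. Then l_ε(θ*+Δ) − l_ε(θ*) ≤ Δᵀg + (Δᵀx)² + ε²‖Δ‖₂² + 4ε‖θ*+Δ‖₂·|Δᵀx| + 2ε(‖θ*+Δ‖₂ − ‖θ*‖₂)·(Δᵀx) + 2ε·[(‖θ*+Δ‖₂‖θ*‖₂ − (θ*+Δ)ᵀθ*)/‖θ*‖₂]·(xᵀθ*−y). -/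

import Mathlib

open MeasureTheory ProbabilityTheory Real Filter Matrix
open scoped RealInnerProductSpace BigOperators NNReal ENNReal Topology

noncomputable section

/-- The pointwise `L2`-adversarial squared loss of the linear model at a data point `(x,y)`:
`l_ε(θ) = (xᵀθ−y)² + 2ε‖θ‖₂|xᵀθ−y| + ε²‖θ‖₂² = (|xᵀθ−y| + ε‖θ‖₂)²`. -/
def ladv {d : ℕ} (ε : ℝ) (θ x : EuclideanSpace ℝ (Fin d)) (y : ℝ) : ℝ :=
  (⟪x, θ⟫ - y) ^ 2 + 2 * ε * ‖θ‖ * |⟪x, θ⟫ - y| + ε ^ 2 * ‖θ‖ ^ 2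

lemma abs_add_le_add_add_two_mul_abs {a : ℝ} (ha : 0 ≤ a) (t : ℝ) :
    |a + t| ≤ a + t + 2 * |t| := by
  cases abs_cases (a + t) <;> cases abs_cases t <;> linarith

lemma ladv_add_sub_ladv {d : ℕ} (ε : ℝ) (θ Δ x : EuclideanSpace ℝ (Fin d)) (y : ℝ) :
    ladv ε (θ + Δ) x y - ladv ε θ x y =
      2 * (⟪x, θ⟫ - y) * ⟪Δ, x⟫ + ⟪Δ, x⟫ ^ 2
        + 2 * ε * (‖θ + Δ‖ * |⟪x, θ⟫ - y + ⟪Δ, x⟫| - ‖θ‖ * |⟪x, θ⟫ - y|)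
        + ε ^ 2 * (2 * ⟪Δ, θ⟫ + ‖Δ‖ ^ 2) := by
  have hres : ⟪x, θ + Δ⟫ - y = ⟪x, θ⟫ - y + ⟪Δ, x⟫ := by
    rw [inner_add_right, real_inner_comm Δ x]; ring
  have hnorm : ‖θ + Δ‖ ^ 2 = ‖θ‖ ^ 2 + 2 * ⟪Δ, θ⟫ + ‖Δ‖ ^ 2 := by
    rw [norm_add_sq_real, real_inner_comm]
  simp only [ladv, hres, hnorm]
  ring

/-- Deterministic upper bound on the excess adversarial loss
`l_ε(θ*+Δ) − l_ε(θ*)` in terms of the gradient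
`g = 2x(xᵀθ*−y) + 2ε[(θ*/‖θ*‖)(xᵀθ*−y) + ‖θ*‖x] + 2ε²θ*`, assuming `xᵀθ* − y > 0`. -/
theorem excess_adversarial_loss_upper_bound
    {d : ℕ} (ε : ℝ) (hε : 0 ≤ ε) (θs Δ x : EuclideanSpace ℝ (Fin d)) (y : ℝ)
    (hθs : θs ≠ 0) (hpos : 0 < ⟪x, θs⟫ - y) :
    ladv ε (θs + Δ) x y - ladv ε θs x y ≤
      ⟪Δ, (2 * (⟪x, θs⟫ - y)) • x
            + (2 * ε) • (((⟪x, θs⟫ - y) / ‖θs‖) • θs + ‖θs‖ • x)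
            + (2 * ε ^ 2) • θs⟫
        + ⟪Δ, x⟫ ^ 2 + ε ^ 2 * ‖Δ‖ ^ 2
        + 4 * ε * ‖θs + Δ‖ * |⟪Δ, x⟫|
        + 2 * ε * (‖θs + Δ‖ - ‖θs‖) * ⟪Δ, x⟫
        + 2 * ε * ((‖θs + Δ‖ * ‖θs‖ - ⟪θs + Δ, θs⟫) / ‖θs‖) * (⟪x, θs⟫ - y) := by
  set a := ⟪x, θs⟫ - y
  have hcross : ⟪θs + Δ, θs⟫ = ‖θs‖ ^ 2 + ⟪Δ, θs⟫ := by
    rw [inner_add_left, real_inner_self_eq_norm_sq]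
  have hdiv : a / ‖θs‖ * ⟪Δ, θs⟫ + (‖θs + Δ‖ * ‖θs‖ - (‖θs‖ ^ 2 + ⟪Δ, θs⟫)) / ‖θs‖ * a
      = (‖θs + Δ‖ - ‖θs‖) * a := by
    field_simp [norm_ne_zero_iff.mpr hθs]
    ring
  -- After expanding both sides, the right one exceeds the left by exactly this quantity.
  have hgap : 0 ≤ 2 * ε * ‖θs + Δ‖ * (a + ⟪Δ, x⟫ + 2 * |⟪Δ, x⟫| - |a + ⟪Δ, x⟫|) :=
    mul_nonneg (by positivity) (sub_nonneg.2 (abs_add_le_add_add_two_mul_abs hpos.le _))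
  rw [ladv_add_sub_ladv, abs_of_pos hpos, hcross]
  simp only [inner_add_right, real_inner_smul_right]
  linear_combination hgap - 2 * ε * hdiv

end
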